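/- Let F ∈ Mₙ(ℂ) be skew-symmetric, let Φ = −(1/2) Σ_{i,j=1}^n F_{ij} e_i ∧ e_j ∈ Λ²(ℂⁿ), and let W = Σ_{k=0}^{n} Φ^k / k! ∈ Λ(ℂⁿ) (a finite sum, since Φ is nilpotent; W is the Grassmann–Gaussian exponent exp Φ). Then W ≠ 0 and, for every i = 1,…,n, ∂_i W + Σ_{j=1}^n F_{ij} (e_j ∧ W) = 0; that is, W is annihilated by each operator ∂_i + Σ_j F_{ij} x_j. -/

import Mathlib

open Matrix

noncomputable section

/-- The symmetric bilinear form `B((β,γ),(β',γ')) = Σ_t (β_t γ'_t + β'_t γ_t)` on `ℂⁿ ⊕ ℂⁿ`. -/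
def Bform (n : ℕ) (p q : (Fin n → ℂ) × (Fin n → ℂ)) : ℂ :=
  ∑ t, (p.1 t * q.2 t + q.1 t * p.2 t)

/-- The Grassmann (exterior) algebra `Λ(ℂⁿ)` on `n` generators. -/
abbrev GA (n : ℕ) := ExteriorAlgebra ℂ (Fin n → ℂ)

/-- `x_t` : left exterior multiplication by the `t`-th standard basis vector `e_t`. -/
noncomputable def Xop (n : ℕ) (t : Fin n) : GA n →ₗ[ℂ] GA n :=
  LinearMap.mulLeft ℂ (ExteriorAlgebra.ι ℂ (Pi.single t 1))

/-- `∂_t` : left interior multiplication (contraction) with the `t`-th dual basis vector. -/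
noncomputable def Dop (n : ℕ) (t : Fin n) : GA n →ₗ[ℂ] GA n :=
  CliffordAlgebra.contractLeft (LinearMap.proj t)

/-- The operator `d_{(β,γ)} = Σ_t (β_t ∂_t + γ_t x_t)` on `Λ(ℂⁿ)`. -/
noncomputable def dOp (n : ℕ) (p : (Fin n → ℂ) × (Fin n → ℂ)) : GA n →ₗ[ℂ] GA n :=
  ∑ t, (p.1 t • Dop n t + p.2 t • Xop n t)

/-!
A contraction `∂ = d⌋·` is an odd derivation, and a degree-two element `Φ` is even, so
`∂ (Φ a) = (∂Φ) a + Φ ∂a`; moreover `∂Φ` has degree one and hence commutes with `Φ`. This gives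
`∂ Φ^(k+1) = (k+1) (∂Φ) Φ^k`, and therefore `∂ (Σ_{k ≤ N} Φ^k / k!) = (∂Φ) · Σ_{k ≤ N} Φ^k / k!`
as soon as the top term `(∂Φ) Φ^N` vanishes, which it does for `2N ≥ n` since its degree
`2N + 1` exceeds `n`. For `Φ = -½ Σ F_ij e_i e_j` with `F` skew, `∂_i Φ = -Σ_j F_ij e_j`, which
is the annihilation identity. Finally `W ≠ 0` because its scalar part is `1`.
-/

open CliffordAlgebra Finset

namespace ExteriorAlgebra

section CommRing

variable {R M : Type*} [CommRing R] [AddCommGroup M] [Module R M]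

theorem ι_mul_ι_mem_exteriorPower_two (u v : M) : ι R u * ι R v ∈ ⋀[R]^2 M := by
  rw [exteriorPower, pow_two]
  exact Submodule.mul_mem_mul (LinearMap.mem_range_self _ u) (LinearMap.mem_range_self _ v)

theorem algebraMapInv_eq_zero_of_mem_exteriorPower {k : ℕ} (hk : k ≠ 0)
    {x : ExteriorAlgebra R M} (hx : x ∈ ⋀[R]^k M) : algebraMapInv x = 0 := by
  obtain ⟨k, rfl⟩ := Nat.exists_eq_succ_of_ne_zero hk
  rw [exteriorPower, pow_succ'] at hx
  induction hx using Submodule.mul_induction_on' with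
  | mem_mul_mem y hy z _ =>
    obtain ⟨u, rfl⟩ := hy
    simp [algebraMapInv]
  | add y _ z _ hy hz => rw [map_add, hy, hz, add_zero]

theorem exteriorPower_eq_bot_of_finrank_lt [Nontrivial R] [Module.Free R M] [Module.Finite R M]
    {m : ℕ} (hm : Module.finrank R M < m) : ⋀[R]^m M = ⊥ := by
  have h := exteriorPower.finrank_eq R (M := M) m
  rw [Nat.choose_eq_zero_of_lt hm, Module.finrank_eq_zero_iff_of_free] at h
  exact Submodule.subsingleton_iff_eq_bot.mp h

theorem commute_ι_ι_mul_ι (u v w : M) : Commute (ι R u) (ι R v * ι R w) := by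
  have anticomm (x y : M) : ι R x * ι R y = -(ι R y * ι R x) :=
    eq_neg_of_add_eq_zero_left (ι_add_mul_swap x y)
  calc ι R u * (ι R v * ι R w) = -(ι R v * (ι R u * ι R w)) := by
        rw [← mul_assoc, anticomm u v, neg_mul, mul_assoc]
    _ = ι R v * ι R w * ι R u := by rw [anticomm u w, mul_neg, neg_neg, mul_assoc]

theorem commute_of_mem_exteriorPower_two {y x : ExteriorAlgebra R M}
    (hy : y ∈ LinearMap.range (ι R)) (hx : x ∈ ⋀[R]^2 M) : Commute y x := by
  obtain ⟨u, rfl⟩ := hy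
  rw [exteriorPower, pow_two] at hx
  induction hx using Submodule.mul_induction_on' with
  | mem_mul_mem a ha b hb =>
    obtain ⟨v, rfl⟩ := ha
    obtain ⟨w, rfl⟩ := hb
    exact commute_ι_ι_mul_ι u v w
  | add a _ b _ ha hb => exact ha.add_right hb

variable (d : Module.Dual R M)

theorem contractLeft_ι_mul_ι (u v : M) :
    contractLeft d (ι R u * ι R v) = d u • ι R v - d v • ι R u := by
  rw [contractLeft_ι_mul, contractLeft_ι, Algebra.algebraMap_eq_smul_one, mul_smul_comm, mul_one]

theorem contractLeft_mem_range_ι {x : ExteriorAlgebra R M} (hx : x ∈ ⋀[R]^2 M) :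
    contractLeft d x ∈ LinearMap.range (ι R) := by
  rw [exteriorPower, pow_two] at hx
  induction hx using Submodule.mul_induction_on' with
  | mem_mul_mem a ha b hb =>
    obtain ⟨u, rfl⟩ := ha
    obtain ⟨v, rfl⟩ := hb
    rw [contractLeft_ι_mul_ι, ← map_smul, ← map_smul, ← map_sub]
    exact LinearMap.mem_range_self _ _
  | add a _ b _ ha hb => rw [map_add]; exact add_mem ha hb

theorem contractLeft_mul_of_mem_exteriorPower_two {x : ExteriorAlgebra R M}
    (hx : x ∈ ⋀[R]^2 M) (a : ExteriorAlgebra R M) :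
    contractLeft d (x * a) = contractLeft d x * a + x * contractLeft d a := by
  rw [exteriorPower, pow_two] at hx
  induction hx using Submodule.mul_induction_on' with
  | mem_mul_mem y hy z hz =>
    obtain ⟨u, rfl⟩ := hy
    obtain ⟨v, rfl⟩ := hz
    rw [mul_assoc, contractLeft_ι_mul, contractLeft_ι_mul, contractLeft_ι_mul_ι]
    simp only [mul_sub, sub_mul, mul_smul_comm, smul_mul_assoc, mul_assoc]
    abel
  | add y _ z _ hy hz => simp only [add_mul, map_add, hy, hz]; abel

theorem contractLeft_pow_succ {x : ExteriorAlgebra R M} (hx : x ∈ ⋀[R]^2 M) (k : ℕ) :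
    contractLeft d (x ^ (k + 1)) = (k + 1) • (contractLeft d x * x ^ k) := by
  induction k with
  | zero => simp
  | succ k ih =>
    have hcomm := commute_of_mem_exteriorPower_two (contractLeft_mem_range_ι d hx) hx
    rw [pow_succ' x (k + 1), contractLeft_mul_of_mem_exteriorPower_two d hx, ih, mul_smul_comm,
      ← mul_assoc, ← hcomm.eq, mul_assoc, ← pow_succ']
    module

theorem contractLeft_mul_pow_eq_zero [Nontrivial R] [Module.Free R M] [Module.Finite R M]
    {x : ExteriorAlgebra R M} (hx : x ∈ ⋀[R]^2 M) {N : ℕ} (hN : Module.finrank R M ≤ 2 * N) :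
    contractLeft d x * x ^ N = 0 := by
  have hmem : contractLeft d x * x ^ N ∈ ⋀[R]^(2 * N + 1) M := by
    rw [exteriorPower, pow_succ', pow_mul]
    exact Submodule.mul_mem_mul (contractLeft_mem_range_ι d hx) (Submodule.pow_mem_pow _ hx N)
  rwa [exteriorPower_eq_bot_of_finrank_lt (by omega), Submodule.mem_bot] at hmem

theorem contractLeft_sum_smul_ι_mul_ι_of_skew {n : Type*} [Fintype n] (F : Matrix n n R)
    (hF : Fᵀ = -F) (u : n → M) :
    contractLeft d (∑ i, ∑ j, F i j • (ι R (u i) * ι R (u j))) =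
      (2 : R) • ∑ i, ∑ j, (F i j * d (u i)) • ι R (u j) := by
  have hskew (i j : n) : F j i = -F i j := by simpa using congrFun (congrFun hF i) j
  simp only [map_sum, map_smul, contractLeft_ι_mul_ι, smul_sub, sum_sub_distrib, smul_smul]
  simp only [sub_eq_add_neg, ← sum_neg_distrib, ← neg_smul, ← neg_mul, ← hskew, two_smul]
  exact congrArg _ sum_comm

end CommRing

open Nat in
theorem contractLeft_sum_inv_factorial_smul_pow {K M : Type*} [Field K] [CharZero K]
    [AddCommGroup M] [Module K M] (d : Module.Dual K M) {x : ExteriorAlgebra K M}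
    (hx : x ∈ ⋀[K]^2 M) {N : ℕ} (hN : contractLeft d x * x ^ N = 0) :
    contractLeft d (∑ k ∈ range (N + 1), (k ! : K)⁻¹ • x ^ k) =
      contractLeft d x * ∑ k ∈ range (N + 1), (k ! : K)⁻¹ • x ^ k := by
  have hcoeff (k : ℕ) : ((k + 1)! : K)⁻¹ * (k + 1 : ℕ) = (k ! : K)⁻¹ := by
    rw [factorial_succ]; push_cast; field_simp
  conv_lhs => rw [sum_range_succ']
  rw [mul_sum, sum_range_succ, mul_smul_comm, hN, smul_zero, add_zero]
  simp only [map_add, map_sum, map_smul, contractLeft_pow_succ d hx, pow_zero, contractLeft_one,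
    smul_zero, add_zero, mul_smul_comm, ← Nat.cast_smul_eq_nsmul K, smul_smul, hcoeff]

end ExteriorAlgebra

open ExteriorAlgebra

theorem Dop_gaussian_quadratic (n : ℕ) (F : Matrix (Fin n) (Fin n) ℂ) (hF : Fᵀ = -F) (t : Fin n) :
    Dop n t (-(1/2 : ℂ) • ∑ i, ∑ j, F i j • (ι ℂ (Pi.single i 1) * ι ℂ (Pi.single j 1))) =
      -∑ j, F t j • ι ℂ (Pi.single j 1) := by
  rw [Dop, map_smul, contractLeft_sum_smul_ι_mul_ι_of_skew _ F hF]
  simp [Pi.single_apply, ite_smul, smul_smul]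

theorem gaussian_exponent_annihilated
    (n : ℕ) (F : Matrix (Fin n) (Fin n) ℂ) (hF : Fᵀ = -F)
    (Φ : GA n)
    (hΦ : Φ = -(1/2 : ℂ) • ∑ i, ∑ j, F i j •
      (ExteriorAlgebra.ι ℂ (Pi.single i 1) * ExteriorAlgebra.ι ℂ (Pi.single j 1)))
    (W : GA n)
    (hW : W = ∑ k ∈ Finset.range (n + 1), (Nat.factorial k : ℂ)⁻¹ • Φ ^ k) :
    W ≠ 0 ∧ ∀ i, Dop n i W + ∑ j, F i j • Xop n j W = 0 := by
  have hΦ2 : Φ ∈ ⋀[ℂ]^2 (Fin n → ℂ) := hΦ ▸ Submodule.smul_mem _ _ (Submodule.sum_mem _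
    fun i _ => Submodule.sum_mem _ fun j _ =>
      Submodule.smul_mem _ _ (ι_mul_ι_mem_exteriorPower_two _ _))
  refine ⟨fun hW0 => ?_, fun t => ?_⟩
  · have hscalar : algebraMapInv W = 1 := by
      simp [hW, algebraMapInv_eq_zero_of_mem_exteriorPower two_ne_zero hΦ2, sum_range_succ']
    simp [hW0] at hscalar
  · have hDW : Dop n t W = Dop n t Φ * W := hW ▸ contractLeft_sum_inv_factorial_smul_pow _ hΦ2
      (contractLeft_mul_pow_eq_zero _ hΦ2 (by rw [Module.finrank_fin_fun]; omega))
    rw [hDW, hΦ, Dop_gaussian_quadratic n F hF]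
    simp [Xop, sum_mul]
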